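/- Fix 1 ≤ i ≤ m. If there exists a pattern 𝒜 of size (i,m) such that the number of column-even Latin (i,m)-rectangles with pattern 𝒜 differs from the number of column-odd ones, then for every 1 ≤ i' ≤ i there exists a pattern ℬ of size (i',m) such that the number of column-even Latin (i',m)-rectangles with pattern ℬ differs from the number of column-odd ones. -/

import Mathlib

open Finset

/-- A Latin `(i,m)`-rectangle. -/
def IsLatinRect {i m : ℕ} (A : Fin i → Fin m → Fin m) : Prop :=
  (∀ p, Function.Bijective (A p)) ∧ ∀ q, Function.Injective fun p => A p q

/-- The column sign `ε_c(A)`. -/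
def colSign {i m : ℕ} (A : Fin i → Fin m → Fin m) : ℤ :=
  ∏ q : Fin m, Int.sign (∏ p : Fin i, ∏ p' ∈ Finset.univ.filter (fun p' => p < p'),
    (((A p' q : ℕ) : ℤ) - ((A p q : ℕ) : ℤ)))

/-- The pattern of a rectangle: the tuple of underlying sets of its columns. -/
def patternOf {i m : ℕ} (A : Fin i → Fin m → Fin m) : Fin m → Finset (Fin m) :=
  fun q => Finset.image (fun p => A p q) Finset.univ

/-- A pattern of size `(i,m)`: an `m`-tuple of `i`-element subsets of `Fin m` such that
each element of `Fin m` occurs in exactly `i` of the sets. -/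
def IsPattern (i : ℕ) {m : ℕ} (P : Fin m → Finset (Fin m)) : Prop :=
  (∀ q, (P q).card = i) ∧ ∀ x : Fin m, (Finset.univ.filter fun q => x ∈ P q).card = i

/-- The number of column-even Latin rectangles with pattern `P`. -/
noncomputable def Lpos (i : ℕ) {m : ℕ} (P : Fin m → Finset (Fin m)) : ℕ :=
  Nat.card {A : Fin i → Fin m → Fin m // IsLatinRect A ∧ patternOf A = P ∧ colSign A = 1}

/-- The number of column-odd Latin rectangles with pattern `P`. -/
noncomputable def Lneg (i : ℕ) {m : ℕ} (P : Fin m → Finset (Fin m)) : ℕ :=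
  Nat.card {A : Fin i → Fin m → Fin m // IsLatinRect A ∧ patternOf A = P ∧ colSign A = -1}

/-!
Deleting the first row `σ` of a Latin `(i+1,m)`-rectangle with pattern `P` leaves a Latin
`(i,m)`-rectangle `B` whose pattern `Q` is again a pattern, and `σ q` is the unique element of
`P q \ Q q`. So the rectangles with pattern `P` whose lower part has pattern `Q` are exactly the
rectangles `σ` on top of `B`, with `B` Latin of pattern `Q`, and the column sign of such a
rectangle is the column sign of `B` times a factor depending only on `σ` and `Q`
(split off the first row of each column's Vandermonde product). Hence the signed count
`Lpos - Lneg` for `P` is a combination of signed counts of `(i,m)`-patterns, and if these all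
vanish at height `i'`, they vanish at every larger height.
-/

open Matrix

theorem sum_eq_card_filter_eq_one_sub_card_filter_eq_neg_one {α : Type*} (s : Finset α)
    (f : α → ℤ) (hf : ∀ a ∈ s, f a = 1 ∨ f a = -1) :
    ∑ a ∈ s, f a = #{a ∈ s | f a = 1} - #{a ∈ s | f a = -1} := by
  have hneg : {a ∈ s | ¬f a = 1} = {a ∈ s | f a = -1} := by
    refine filter_congr fun a ha => ?_
    rcases hf a ha with h | h <;> simp [h]
  rw [← sum_filter_add_sum_filter_not s (f · = 1), hneg,
    sum_congr rfl fun a ha => (mem_filter.1 ha).2, sum_congr rfl fun a ha => (mem_filter.1 ha).2]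
  simp [sub_eq_add_neg]

theorem Int.sign_prod {ι : Type*} (s : Finset ι) (f : ι → ℤ) :
    (∏ a ∈ s, f a).sign = ∏ a ∈ s, (f a).sign :=
  map_prod (⟨⟨Int.sign, Int.sign_one⟩, Int.sign_mul⟩ : ℤ →* ℤ) f s

theorem det_vandermonde_cons {R : Type*} [CommRing R] {n : ℕ} (a : R) (v : Fin n → R) :
    (vandermonde (Fin.cons a v)).det = (∏ k, (v k - a)) * (vandermonde v).det := by
  rw [det_vandermonde, det_vandermonde, Fin.prod_univ_succ, Fin.prod_Ioi_zero]
  simp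

theorem Fin.swap_cons {n : ℕ} {β γ : Type*} (x : β → γ) (f : Fin n → β → γ) (b : β) :
    (fun p => (Fin.cons x f : Fin (n + 1) → β → γ) p b) = Fin.cons (x b) fun p => f p b :=
  funext (Fin.cases rfl fun _ => rfl)

section ColSign

variable {i m : ℕ}

theorem colSign_eq_prod_sign_det_vandermonde (A : Fin i → Fin m → Fin m) :
    colSign A = ∏ q, (vandermonde fun p => ((A p q : ℕ) : ℤ)).det.sign := by
  simp only [colSign, det_vandermonde, filter_lt_eq_Ioi]

theorem colSign_eq_one_or_neg_one {A : Fin i → Fin m → Fin m}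
    (hA : ∀ q, Function.Injective fun p => A p q) : colSign A = 1 ∨ colSign A = -1 := by
  refine Int.isUnit_iff.1 ?_
  rw [colSign_eq_prod_sign_det_vandermonde]
  refine IsUnit.prod_univ_iff.2 fun q => Int.isUnit_iff_natAbs_eq.2 (Int.natAbs_sign_of_ne_zero ?_)
  exact det_vandermonde_ne_zero_iff.2 (Nat.cast_injective.comp (Fin.val_injective.comp (hA q)))

def crossSign (σ : Fin m → Fin m) (Q : Fin m → Finset (Fin m)) : ℤ :=
  ∏ q, ∏ y ∈ Q q, Int.sign ((y : ℕ) - (σ q : ℕ) : ℤ)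

theorem colSign_cons (σ : Fin m → Fin m) {B : Fin i → Fin m → Fin m}
    (hB : ∀ q, Function.Injective fun p => B p q) :
    colSign (Fin.cons σ B) = crossSign σ (patternOf B) * colSign B := by
  have hcol (q : Fin m) : (fun p => (((Fin.cons σ B : Fin (i + 1) → Fin m → Fin m) p q : ℕ) : ℤ)) =
      Fin.cons ((σ q : ℕ) : ℤ) fun p => ((B p q : ℕ) : ℤ) :=
    funext (Fin.cases rfl fun _ => rfl)
  simp only [colSign_eq_prod_sign_det_vandermonde, hcol, det_vandermonde_cons, Int.sign_mul,
    prod_mul_distrib, crossSign, patternOf]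
  congr 1
  refine prod_congr rfl fun q _ => ?_
  rw [prod_image fun p _ p' _ h => hB q h, Int.sign_prod]

end ColSign

section LatinRect

variable {i m : ℕ}

instance (A : Fin i → Fin m → Fin m) : Decidable (IsLatinRect A) :=
  inferInstanceAs (Decidable (_ ∧ _))

theorem patternOf_cons (σ : Fin m → Fin m) (B : Fin i → Fin m → Fin m) (q : Fin m) :
    patternOf (Fin.cons σ B) q = insert (σ q) (patternOf B q) := by
  ext y
  simp [patternOf, Fin.exists_fin_succ, eq_comm]

theorem isLatinRect_cons_iff {σ : Fin m → Fin m} {B : Fin i → Fin m → Fin m} :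
    IsLatinRect (Fin.cons σ B) ↔
      Function.Bijective σ ∧ IsLatinRect B ∧ ∀ q, σ q ∉ patternOf B q := by
  simp only [IsLatinRect, Fin.forall_fin_succ, Fin.cons_zero, Fin.cons_succ, Fin.swap_cons,
    Fin.cons_injective_iff, forall_and, patternOf, mem_image, Set.mem_range, mem_univ, true_and]
  tauto

theorem isPattern_patternOf {A : Fin i → Fin m → Fin m} (hA : IsLatinRect A) :
    IsPattern i (patternOf A) := by
  refine ⟨fun q => by simp [patternOf, card_image_of_injective _ (hA.2 q)], fun x => ?_⟩
  let col : Fin i → Fin m := fun p => (Equiv.ofBijective _ (hA.1 p)).symm x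
  have hcol (p : Fin i) : A p (col p) = x := Equiv.ofBijective_apply_symm_apply _ (hA.1 p) x
  have hcols : ({q | x ∈ patternOf A q} : Finset (Fin m)) = univ.image col := by
    ext q
    simp only [mem_filter, mem_univ, true_and, patternOf, mem_image, col, Equiv.symm_apply_eq,
      Equiv.ofBijective_apply]
    exact exists_congr fun _ => eq_comm
  rw [hcols, card_image_of_injective, card_fin]
  intro p p' h
  exact hA.2 (col p) (show A p (col p) = A p' (col p) by rw [hcol, h, hcol])

end LatinRect

section SignedCount

variable {i m : ℕ}

def signedCount (i : ℕ) (P : Fin m → Finset (Fin m)) : ℤ :=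
  ∑ A : Fin i → Fin m → Fin m with IsLatinRect A ∧ patternOf A = P, colSign A

theorem signedCount_eq_Lpos_sub_Lneg (i : ℕ) (P : Fin m → Finset (Fin m)) :
    signedCount i P = Lpos i P - Lneg i P := by
  have hcard (c : ℤ) :
      Nat.card {A : Fin i → Fin m → Fin m // IsLatinRect A ∧ patternOf A = P ∧ colSign A = c} =
        #{A ∈ {A : Fin i → Fin m → Fin m | IsLatinRect A ∧ patternOf A = P} | colSign A = c} := by
    rw [Nat.card_eq_fintype_card, Fintype.card_subtype, filter_filter]
    simp only [and_assoc]
  rw [signedCount, Lpos, Lneg, hcard, hcard]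
  exact sum_eq_card_filter_eq_one_sub_card_filter_eq_neg_one _ _
    fun A hA => colSign_eq_one_or_neg_one (mem_filter.1 hA).2.1.2

theorem signedCount_eq_zero_iff {P : Fin m → Finset (Fin m)} :
    signedCount i P = 0 ↔ Lpos i P = Lneg i P := by
  rw [signedCount_eq_Lpos_sub_Lneg, sub_eq_zero, Nat.cast_inj]

theorem eq_of_patternOf_cons_eq {σ τ : Fin m → Fin m} {B : Fin i → Fin m → Fin m}
    (hσ : IsLatinRect (Fin.cons σ B))
    (h : patternOf (Fin.cons σ B) = patternOf (Fin.cons τ B)) : σ = τ := by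
  funext q
  have hq := congrFun h q
  rw [patternOf_cons, patternOf_cons] at hq
  exact (insert_inj ((isLatinRect_cons_iff.1 hσ).2.2 q)).1 hq

theorem filter_patternOf_tail_eq_image {σ : Fin m → Fin m} {B₀ : Fin i → Fin m → Fin m}
    (h₀ : IsLatinRect (Fin.cons σ B₀)) :
    {A ∈ ({A | IsLatinRect A ∧ patternOf A = patternOf (Fin.cons σ B₀)} :
        Finset (Fin (i + 1) → Fin m → Fin m)) | patternOf (Fin.tail A) = patternOf B₀} =
      image (fun B => (Fin.cons σ B : Fin (i + 1) → Fin m → Fin m))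
        ({B | IsLatinRect B ∧ patternOf B = patternOf B₀} : Finset (Fin i → Fin m → Fin m)) := by
  obtain ⟨hσ, -, hσB₀⟩ := isLatinRect_cons_iff.1 h₀
  have hcons {B : Fin i → Fin m → Fin m} (hB : patternOf B = patternOf B₀) :
      patternOf (Fin.cons σ B) = patternOf (Fin.cons σ B₀) ∧
        (IsLatinRect (Fin.cons σ B) ↔ IsLatinRect B) := by
    refine ⟨funext fun q => by rw [patternOf_cons, patternOf_cons, hB], ?_⟩
    rw [isLatinRect_cons_iff, hB]
    exact ⟨fun h => h.2.1, fun h => ⟨hσ, h, hσB₀⟩⟩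
  ext A
  obtain ⟨τ, B, rfl⟩ : ∃ τ B, A = Fin.cons τ B := ⟨_, _, (Fin.cons_self_tail A).symm⟩
  simp only [mem_filter, mem_univ, true_and, Fin.tail_cons, mem_image, Fin.cons_inj]
  constructor
  · rintro ⟨⟨hτB, hpat⟩, hB⟩
    obtain ⟨hpatσ, hLσ⟩ := hcons hB
    have hBL := (isLatinRect_cons_iff.1 hτB).2.1
    exact ⟨B, ⟨hBL, hB⟩, eq_of_patternOf_cons_eq (hLσ.2 hBL) (hpatσ.trans hpat.symm), rfl⟩
  · rintro ⟨B, ⟨hBL, hB⟩, rfl, rfl⟩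
    exact ⟨⟨(hcons hB).2.2 hBL, (hcons hB).1⟩, hB⟩

theorem signedCount_succ_eq_zero
    (H : ∀ Q : Fin m → Finset (Fin m), IsPattern i Q → signedCount i Q = 0)
    (P : Fin m → Finset (Fin m)) : signedCount (i + 1) P = 0 := by
  rw [signedCount, ← sum_fiberwise _ fun A => patternOf (Fin.tail A)]
  refine sum_eq_zero fun Q _ => ?_
  obtain hempty | ⟨A₀, hA₀⟩ := eq_empty_or_nonempty
    {A ∈ {A : Fin (i + 1) → Fin m → Fin m | IsLatinRect A ∧ patternOf A = P} |
      patternOf (Fin.tail A) = Q}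
  · rw [hempty, sum_empty]
  obtain ⟨σ, B₀, rfl⟩ : ∃ σ B₀, A₀ = Fin.cons σ B₀ := ⟨_, _, (Fin.cons_self_tail A₀).symm⟩
  simp only [mem_filter, mem_univ, true_and, Fin.tail_cons] at hA₀
  obtain ⟨⟨h₀, rfl⟩, rfl⟩ := hA₀
  rw [filter_patternOf_tail_eq_image h₀,
    sum_image fun _ _ _ _ h => Fin.cons_right_injective (α := fun _ => Fin m → Fin m) σ h]
  calc ∑ B ∈ {B | IsLatinRect B ∧ patternOf B = patternOf B₀}, colSign (Fin.cons σ B)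
      = ∑ B ∈ {B | IsLatinRect B ∧ patternOf B = patternOf B₀},
          crossSign σ (patternOf B₀) * colSign B :=
        sum_congr rfl fun B hB => by
          obtain ⟨hBL, hB⟩ := (mem_filter.1 hB).2
          rw [colSign_cons σ hBL.2, hB]
    _ = crossSign σ (patternOf B₀) * signedCount i (patternOf B₀) := (mul_sum ..).symm
    _ = 0 := by
      rw [H _ (isPattern_patternOf (isLatinRect_cons_iff.1 h₀).2.1), mul_zero]

theorem signedCount_eq_zero_of_le {j : ℕ} (hij : i ≤ j)
    (H : ∀ Q : Fin m → Finset (Fin m), IsPattern i Q → signedCount i Q = 0) :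
    ∀ P : Fin m → Finset (Fin m), IsPattern j P → signedCount j P = 0 := by
  induction j, hij using Nat.le_induction with
  | base => exact H
  | succ j _ ih => exact fun P _ => signedCount_succ_eq_zero ih P

end SignedCount

theorem exists_pattern_of_smaller_height_general {i m : ℕ}
    (h : ∃ P : Fin m → Finset (Fin m), IsPattern i P ∧ Lpos i P ≠ Lneg i P) :
    ∀ i' : ℕ, 1 ≤ i' → i' ≤ i →
      ∃ P' : Fin m → Finset (Fin m), IsPattern i' P' ∧ Lpos i' P' ≠ Lneg i' P' := by
  intro i' _ hi'i
  obtain ⟨P, hP, hne⟩ := h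
  by_contra! hbalanced
  have hzero := signedCount_eq_zero_of_le hi'i
    (fun Q hQ => signedCount_eq_zero_iff.2 (hbalanced Q hQ)) P hP
  exact hne (signedCount_eq_zero_iff.1 hzero)

/-- If for some `(i,m)`-pattern the numbers of column-even and column-odd Latin rectangles
differ, then the same holds for some `(i',m)`-pattern for every `1 ≤ i' ≤ i`. -/
theorem exists_pattern_of_smaller_height {i m : ℕ} (hi1 : 1 ≤ i) (him : i ≤ m)
    (h : ∃ P : Fin m → Finset (Fin m), IsPattern i P ∧ Lpos i P ≠ Lneg i P) :
    ∀ i' : ℕ, 1 ≤ i' → i' ≤ i →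
      ∃ P' : Fin m → Finset (Fin m), IsPattern i' P' ∧ Lpos i' P' ≠ Lneg i' P' :=
  exists_pattern_of_smaller_height_general h
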